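/- arXiv:1407.4936 — 2 statements merged into one kernel-verified Lean document; each statement's English description precedes it below -/
import Mathlib

section
/- In the Clifford algebra of a real inner product space (with negative definite quadratic form convention), the square of a 3-form T satisfies T² = -2σ_T + ‖T‖², where σ_T and the scalar ‖T‖² are embedded via exterior forms. -/
/- STATEMENT 3: In the Clifford algebra of a real inner product space (with the negative
definite convention v² = -‖v‖²), the square of a 3-form T satisfies T² = -2σ_T + ‖T‖².

We take V = Fin n → ℝ with its standard inner product, Q(v) = -Σ v_i² the negative definite
quadratic form, and embed a k-form α into Cl(V) via the standard vector space isomorphism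
Λ*V ≅ Cl(V), i.e. α ↦ Σ_{i₁<...<i_k} α(e_{i₁},...,e_{i_k}) e_{i₁}···e_{i_k}, which (since α is
alternating) equals (1/k!) Σ_{i₁,...,i_k} α(e_{i₁},...,e_{i_k}) e_{i₁}···e_{i_k}.
Here σ_T(X,Y,Z,W) = Σ_cyclic{X,Y,Z} ⟨T(X,Y), T(Z,W)⟩ with
⟨T(X,Y),T(Z,W)⟩ = Σ_m T(X,Y,e_m) T(Z,W,e_m), and ‖T‖² = Σ_{i<j<k} T(e_i,e_j,e_k)². -/

noncomputable section

variable (n : ℕ)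

/-- the negative definite quadratic form `Q v = -‖v‖²` on `Fin n → ℝ` -/
def Q : QuadraticForm ℝ (Fin n → ℝ) :=
  QuadraticMap.weightedSumSquares ℝ (fun _ : Fin n => (-1 : ℝ))

/-- the standard basis vectors, viewed inside the Clifford algebra -/
def γ (i : Fin n) : CliffordAlgebra (Q n) :=
  CliffordAlgebra.ι (Q n) (Pi.single i 1)

/-- standard basis of `Fin n → ℝ` -/
def e (i : Fin n) : Fin n → ℝ := Pi.single i 1

/-- the image of the 3-form `T` in the Clifford algebra -/
def cl3 (T : AlternatingMap ℝ (Fin n → ℝ) ℝ (Fin 3)) : CliffordAlgebra (Q n) :=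
  ∑ i : Fin n, ∑ j : Fin n, ∑ k : Fin n,
    (T ![e n i, e n j, e n k] / 6) • (γ n i * γ n j * γ n k)

/-- the value σ_T(X,Y,Z,W) -/
def sigmaT (T : AlternatingMap ℝ (Fin n → ℝ) ℝ (Fin 3)) (X Y Z W : Fin n → ℝ) : ℝ :=
  ∑ m : Fin n,
    (T ![X, Y, e n m] * T ![Z, W, e n m]
      + T ![Y, Z, e n m] * T ![X, W, e n m]
      + T ![Z, X, e n m] * T ![Y, W, e n m])

/-- the image of the 4-form `σ_T` in the Clifford algebra -/
def cl4sigma (T : AlternatingMap ℝ (Fin n → ℝ) ℝ (Fin 3)) : CliffordAlgebra (Q n) :=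
  ∑ i : Fin n, ∑ j : Fin n, ∑ k : Fin n, ∑ l : Fin n,
    (sigmaT n T (e n i) (e n j) (e n k) (e n l) / 24) • (γ n i * γ n j * γ n k * γ n l)

/-- `‖T‖² = Σ_{i<j<k} T_{ijk}² = (1/6) Σ_{i,j,k} T_{ijk}²` -/
def normSqT (T : AlternatingMap ℝ (Fin n → ℝ) ℝ (Fin 3)) : ℝ :=
  (∑ i : Fin n, ∑ j : Fin n, ∑ k : Fin n, T ![e n i, e n j, e n k] ^ 2) / 6

lemma Q_single (i : Fin n) : Q n (Pi.single i 1) = -1 := by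
  simp [Q, QuadraticMap.weightedSumSquares_apply, Pi.single_apply]

lemma gg_same (i : Fin n) : γ n i * γ n i = -1 := by
  rw [γ, CliffordAlgebra.ι_sq_scalar, Q_single, map_neg, map_one]

lemma polar_single_ne {i j : Fin n} (h : i ≠ j) :
    QuadraticMap.polar (Q n) (Pi.single i 1) (Pi.single j 1) = 0 := by
  simp [QuadraticMap.polar, Q, QuadraticMap.weightedSumSquares_apply, Pi.single_apply,
    add_mul, mul_add, Finset.sum_add_distrib, ite_and, Finset.sum_ite_eq', h, h.symm]

lemma gg_ne {i j : Fin n} (h : i ≠ j) : γ n i * γ n j = -(γ n j * γ n i) := by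
  have h2 := CliffordAlgebra.ι_mul_ι_add_swap (Q := Q n) (Pi.single i 1) (Pi.single j 1)
  rw [polar_single_ne n h, map_zero] at h2
  have h3 : γ n i * γ n j + γ n j * γ n i = 0 := h2
  linear_combination (norm := module) h3

lemma gg (i j : Fin n) :
    γ n i * γ n j = -(γ n j * γ n i) - (if i = j then (2:ℝ) else 0) • 1 := by
  rcases eq_or_ne i j with rfl | h
  · rw [if_pos rfl, gg_same]; match_scalars; norm_num
  · rw [if_neg h, gg_ne n h]; module

lemma push2 (k l m : Fin n) :
    γ n k * (γ n l * γ n m) = γ n l * γ n m * γ n k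
      + (if k = m then (2:ℝ) else 0) • γ n l - (if k = l then (2:ℝ) else 0) • γ n m := by
  calc γ n k * (γ n l * γ n m) = (γ n k * γ n l) * γ n m := (mul_assoc _ _ _).symm
    _ = (-(γ n l * γ n k) - (if k = l then (2:ℝ) else 0) • 1) * γ n m := by rw [gg n k l]
    _ = -(γ n l * (γ n k * γ n m)) - (if k = l then (2:ℝ) else 0) • γ n m := by
        rw [sub_mul, neg_mul, smul_mul_assoc, one_mul, mul_assoc]
    _ = -(γ n l * (-(γ n m * γ n k) - (if k = m then (2:ℝ) else 0) • 1))
        - (if k = l then (2:ℝ) else 0) • γ n m := by rw [gg n k m]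
    _ = γ n l * (γ n m * γ n k) + (if k = m then (2:ℝ) else 0) • γ n l
        - (if k = l then (2:ℝ) else 0) • γ n m := by
        rw [mul_sub, mul_neg, mul_smul_comm, mul_one]; module
    _ = _ := by rw [← mul_assoc]

lemma push3 (k l m p : Fin n) :
    γ n k * (γ n l * γ n m * γ n p)
      = -(γ n l * γ n m * γ n p * γ n k)
        - (if k = p then (2:ℝ) else 0) • (γ n l * γ n m)
        + (if k = m then (2:ℝ) else 0) • (γ n l * γ n p)
        - (if k = l then (2:ℝ) else 0) • (γ n m * γ n p) := by
  calc γ n k * (γ n l * γ n m * γ n p) = (γ n k * (γ n l * γ n m)) * γ n p :=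
        (mul_assoc (γ n k) (γ n l * γ n m) (γ n p)).symm
    _ = (γ n l * γ n m * γ n k + (if k = m then (2:ℝ) else 0) • γ n l
        - (if k = l then (2:ℝ) else 0) • γ n m) * γ n p := by rw [push2]
    _ = (γ n l * γ n m) * (γ n k * γ n p) + (if k = m then (2:ℝ) else 0) • (γ n l * γ n p)
        - (if k = l then (2:ℝ) else 0) • (γ n m * γ n p) := by
        rw [sub_mul, add_mul, smul_mul_assoc, smul_mul_assoc, mul_assoc]
    _ = (γ n l * γ n m) * (-(γ n p * γ n k) - (if k = p then (2:ℝ) else 0) • 1)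
        + (if k = m then (2:ℝ) else 0) • (γ n l * γ n p)
        - (if k = l then (2:ℝ) else 0) • (γ n m * γ n p) := by rw [gg n k p]
    _ = -((γ n l * γ n m) * (γ n p * γ n k)) - (if k = p then (2:ℝ) else 0) • (γ n l * γ n m)
        + (if k = m then (2:ℝ) else 0) • (γ n l * γ n p)
        - (if k = l then (2:ℝ) else 0) • (γ n m * γ n p) := by
        rw [mul_sub, mul_neg, mul_smul_comm, mul_one]
    _ = _ := by rw [← mul_assoc (γ n l * γ n m) (γ n p) (γ n k)]

lemma pushR4 (i j k l : Fin n) :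
    γ n i * γ n k * γ n l * γ n j
      = γ n i * γ n j * γ n k * γ n l
        + (if k = j then (2:ℝ) else 0) • (γ n i * γ n l)
        - (if l = j then (2:ℝ) else 0) • (γ n i * γ n k) := by
  have h2 : γ n k * γ n l * γ n j
      = γ n j * (γ n k * γ n l) - (if j = l then (2:ℝ) else 0) • γ n k
        + (if j = k then (2:ℝ) else 0) • γ n l := by
    linear_combination (norm := module) (push2 n j k l).symm
  calc γ n i * γ n k * γ n l * γ n j
      = γ n i * (γ n k * γ n l * γ n j) := by rw [mul_assoc, mul_assoc, mul_assoc]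
    _ = γ n i * (γ n j * (γ n k * γ n l)) - (if j = l then (2:ℝ) else 0) • (γ n i * γ n k)
        + (if j = k then (2:ℝ) else 0) • (γ n i * γ n l) := by
        rw [h2, mul_add, mul_sub, mul_smul_comm, mul_smul_comm]
    _ = _ := by
        rw [show γ n i * (γ n j * (γ n k * γ n l)) = γ n i * γ n j * γ n k * γ n l by
          rw [mul_assoc, mul_assoc],
          show (if j = l then (2:ℝ) else 0) = if l = j then (2:ℝ) else 0 by simp [eq_comm],
          show (if j = k then (2:ℝ) else 0) = if k = j then (2:ℝ) else 0 by simp [eq_comm]]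
        module

lemma pushR2 (i j k l : Fin n) :
    γ n i * γ n j * γ n l * γ n k
      = -(γ n i * γ n j * γ n k * γ n l) - (if l = k then (2:ℝ) else 0) • (γ n i * γ n j) := by
  rw [mul_assoc (γ n i * γ n j), gg n l k, mul_sub, mul_neg, ← mul_assoc, mul_smul_comm, mul_one]

lemma sum3_reindex {I M : Type*} [Fintype I] [AddCommMonoid M]
    (F : I → I → I → M) (σ : (I×I×I) ≃ (I×I×I)) :
    (∑ i, ∑ j, ∑ k, F i j k)
      = ∑ i, ∑ j, ∑ k, F (σ (i,j,k)).1 (σ (i,j,k)).2.1 (σ (i,j,k)).2.2 := by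
  have h := (Equiv.sum_comp σ (fun x : I×I×I => F x.1 x.2.1 x.2.2)).symm
  simpa only [Fintype.sum_prod_type] using h

lemma sum4_reindex {I M : Type*} [Fintype I] [AddCommMonoid M]
    (F : I → I → I → I → M) (σ : (I×I×I×I) ≃ (I×I×I×I)) :
    (∑ i, ∑ j, ∑ k, ∑ l, F i j k l)
      = ∑ i, ∑ j, ∑ k, ∑ l,
          F (σ (i,j,k,l)).1 (σ (i,j,k,l)).2.1 (σ (i,j,k,l)).2.2.1 (σ (i,j,k,l)).2.2.2 := by
  have h := (Equiv.sum_comp σ (fun x : I×I×I×I => F x.1 x.2.1 x.2.2.1 x.2.2.2)).symm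
  simpa only [Fintype.sum_prod_type] using h

lemma sum5_reindex {I M : Type*} [Fintype I] [AddCommMonoid M]
    (F : I → I → I → I → I → M) (σ : (I×I×I×I×I) ≃ (I×I×I×I×I)) :
    (∑ i, ∑ j, ∑ k, ∑ l, ∑ m, F i j k l m)
      = ∑ i, ∑ j, ∑ k, ∑ l, ∑ m,
          F (σ (i,j,k,l,m)).1 (σ (i,j,k,l,m)).2.1 (σ (i,j,k,l,m)).2.2.1
            (σ (i,j,k,l,m)).2.2.2.1 (σ (i,j,k,l,m)).2.2.2.2 := by
  have h := (Equiv.sum_comp σ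
    (fun x : I×I×I×I×I => F x.1 x.2.1 x.2.2.1 x.2.2.2.1 x.2.2.2.2)).symm
  simpa only [Fintype.sum_prod_type] using h

def tt (n : ℕ) (T : AlternatingMap ℝ (Fin n → ℝ) ℝ (Fin 3)) (i j k : Fin n) : ℝ :=
  T ![e n i, e n j, e n k]

variable {n : ℕ} (T : AlternatingMap ℝ (Fin n → ℝ) ℝ (Fin 3))

lemma tt_swap12 (i j k : Fin n) : tt n T j i k = -tt n T i j k := by
  have h := T.map_swap ![e n i, e n j, e n k] (i := 0) (j := 1) (by decide)
  rw [show (![e n i, e n j, e n k] ∘ Equiv.swap (0:Fin 3) 1) = ![e n j, e n i, e n k] by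
    funext x; fin_cases x <;> simp [Equiv.swap_apply_def]] at h
  exact h

lemma tt_swap23 (i j k : Fin n) : tt n T i k j = -tt n T i j k := by
  have h := T.map_swap ![e n i, e n j, e n k] (i := 1) (j := 2) (by decide)
  rw [show (![e n i, e n j, e n k] ∘ Equiv.swap (1:Fin 3) 2) = ![e n i, e n k, e n j] by
    funext x; fin_cases x <;> simp [Equiv.swap_apply_def]] at h
  exact h

lemma tt_rot (i j k : Fin n) : tt n T i j k = tt n T j k i := by
  rw [show tt n T j k i = -tt n T k j i from tt_swap12 T k j i,
    show tt n T k j i = -tt n T k i j from tt_swap23 T k i j,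
    show tt n T k i j = -tt n T i k j from tt_swap12 T i k j,
    show tt n T i k j = -tt n T i j k from tt_swap23 T i j k]
  ring

def SS : CliffordAlgebra (Q n) :=
  ∑ i, ∑ j, ∑ k, tt n T i j k • (γ n i * γ n j * γ n k)

def DD (k : Fin n) : CliffordAlgebra (Q n) :=
  ∑ l, ∑ m, tt n T l m k • (γ n l * γ n m)

lemma gS_comm (k : Fin n) :
    γ n k * SS T = -(SS T * γ n k) - (6:ℝ) • DD T k := by
  have hA : SS T * γ n k = ∑ l, ∑ m, ∑ p, tt n T l m p • (γ n l * γ n m * γ n p * γ n k) := by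
    rw [SS, Finset.sum_mul]
    refine Finset.sum_congr rfl fun l _ => ?_
    rw [Finset.sum_mul]
    refine Finset.sum_congr rfl fun m _ => ?_
    rw [Finset.sum_mul]
    exact Finset.sum_congr rfl fun p _ => smul_mul_assoc _ _ _
  have hB : (∑ l, ∑ m, ∑ p,
      (tt n T l m p * (if k = p then (2:ℝ) else 0)) • (γ n l * γ n m)) = (2:ℝ) • DD T k := by
    rw [DD, Finset.smul_sum]
    refine Finset.sum_congr rfl fun l _ => ?_
    rw [Finset.smul_sum]
    refine Finset.sum_congr rfl fun m _ => ?_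
    simp only [mul_ite, mul_zero, ite_smul, zero_smul, Finset.sum_ite_eq, Finset.mem_univ,
      if_true]
    rw [smul_smul, mul_comm]
  have hC : (∑ l, ∑ m, ∑ p,
      (tt n T l m p * (if k = m then (2:ℝ) else 0)) • (γ n l * γ n p))
      = (-2:ℝ) • DD T k := by
    rw [sum3_reindex (fun l m p => (tt n T l m p * (if k = m then (2:ℝ) else 0)) • (γ n l * γ n p))
      ⟨fun x => (x.1, x.2.2, x.2.1), fun x => (x.1, x.2.2, x.2.1), fun x => rfl, fun x => rfl⟩]
    simp only [Equiv.coe_fn_mk]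
    rw [DD, Finset.smul_sum]
    refine Finset.sum_congr rfl fun l _ => ?_
    rw [Finset.smul_sum]
    refine Finset.sum_congr rfl fun m _ => ?_
    simp only [mul_ite, mul_zero, ite_smul, zero_smul, Finset.sum_ite_eq, Finset.mem_univ,
      if_true]
    rw [show tt n T l k m = -tt n T l m k from tt_swap23 T l m k]
    module
  have hD : (∑ l, ∑ m, ∑ p,
      (tt n T l m p * (if k = l then (2:ℝ) else 0)) • (γ n m * γ n p)) = (2:ℝ) • DD T k := by
    rw [sum3_reindex (fun l m p => (tt n T l m p * (if k = l then (2:ℝ) else 0)) • (γ n m * γ n p))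
      ⟨fun x => (x.2.2, x.1, x.2.1), fun x => (x.2.1, x.2.2, x.1), fun x => rfl, fun x => rfl⟩]
    simp only [Equiv.coe_fn_mk]
    rw [DD, Finset.smul_sum]
    refine Finset.sum_congr rfl fun l _ => ?_
    rw [Finset.smul_sum]
    refine Finset.sum_congr rfl fun m _ => ?_
    simp only [mul_ite, mul_zero, ite_smul, zero_smul, Finset.sum_ite_eq, Finset.mem_univ,
      if_true]
    rw [show tt n T k l m = tt n T l m k from tt_rot T k l m]
    module
  calc γ n k * SS T
      = ∑ l, ∑ m, ∑ p,
          (-(tt n T l m p • (γ n l * γ n m * γ n p * γ n k))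
            - (tt n T l m p * (if k = p then (2:ℝ) else 0)) • (γ n l * γ n m)
            + (tt n T l m p * (if k = m then (2:ℝ) else 0)) • (γ n l * γ n p)
            - (tt n T l m p * (if k = l then (2:ℝ) else 0)) • (γ n m * γ n p)) := by
        rw [SS, Finset.mul_sum]
        refine Finset.sum_congr rfl fun l _ => ?_
        rw [Finset.mul_sum]
        refine Finset.sum_congr rfl fun m _ => ?_
        rw [Finset.mul_sum]
        refine Finset.sum_congr rfl fun p _ => ?_
        rw [mul_smul_comm, push3]
        module
    _ = -(∑ l, ∑ m, ∑ p, tt n T l m p • (γ n l * γ n m * γ n p * γ n k))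
        - (∑ l, ∑ m, ∑ p, (tt n T l m p * (if k = p then (2:ℝ) else 0)) • (γ n l * γ n m))
        + (∑ l, ∑ m, ∑ p, (tt n T l m p * (if k = m then (2:ℝ) else 0)) • (γ n l * γ n p))
        - (∑ l, ∑ m, ∑ p, (tt n T l m p * (if k = l then (2:ℝ) else 0)) • (γ n m * γ n p)) := by
        simp only [Finset.sum_sub_distrib, Finset.sum_add_distrib, Finset.sum_neg_distrib]
    _ = -(SS T * γ n k) - (6:ℝ) • DD T k := by
        rw [← hA, hB, hC, hD]
        module

def E1 : CliffordAlgebra (Q n) :=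
  ∑ i, ∑ j, ∑ k, tt n T i j k • (DD T i * γ n j * γ n k)
def E2 : CliffordAlgebra (Q n) :=
  ∑ i, ∑ j, ∑ k, tt n T i j k • (γ n i * DD T j * γ n k)
def E3 : CliffordAlgebra (Q n) :=
  ∑ i, ∑ j, ∑ k, tt n T i j k • (γ n i * γ n j * DD T k)

lemma bigpush (i j k : Fin n) :
    γ n i * γ n j * γ n k * SS T
      = -(SS T * (γ n i * γ n j * γ n k))
        - (6:ℝ) • (DD T i * γ n j * γ n k)
        + (6:ℝ) • (γ n i * DD T j * γ n k)
        - (6:ℝ) • (γ n i * γ n j * DD T k) := by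
  calc γ n i * γ n j * γ n k * SS T
      = (γ n i * γ n j) * (γ n k * SS T) := by rw [mul_assoc]
    _ = (γ n i * γ n j) * (-(SS T * γ n k) - (6:ℝ) • DD T k) := by rw [gS_comm]
    _ = -((γ n i * (γ n j * SS T)) * γ n k) - (6:ℝ) • (γ n i * γ n j * DD T k) := by
        rw [mul_sub, mul_neg, mul_smul_comm, ← mul_assoc, mul_assoc (γ n i)]
    _ = -((γ n i * (-(SS T * γ n j) - (6:ℝ) • DD T j)) * γ n k)
        - (6:ℝ) • (γ n i * γ n j * DD T k) := by rw [gS_comm]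
    _ = (γ n i * SS T) * γ n j * γ n k + (6:ℝ) • (γ n i * DD T j * γ n k)
        - (6:ℝ) • (γ n i * γ n j * DD T k) := by
        rw [mul_sub, mul_neg, mul_smul_comm, ← mul_assoc, sub_mul, neg_mul, smul_mul_assoc]
        module
    _ = (-(SS T * γ n i) - (6:ℝ) • DD T i) * γ n j * γ n k + (6:ℝ) • (γ n i * DD T j * γ n k)
        - (6:ℝ) • (γ n i * γ n j * DD T k) := by rw [gS_comm]
    _ = _ := by
        rw [sub_mul, sub_mul, neg_mul, neg_mul, smul_mul_assoc, smul_mul_assoc,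
          show SS T * (γ n i * γ n j * γ n k) = SS T * γ n i * γ n j * γ n k by
            rw [mul_assoc (SS T) (γ n i) (γ n j), mul_assoc (SS T) (γ n i * γ n j) (γ n k)]]

lemma hS1 (X : CliffordAlgebra (Q n)) :
    SS T * X = ∑ i, ∑ j, ∑ k, tt n T i j k • (γ n i * γ n j * γ n k * X) := by
  rw [SS, Finset.sum_mul]
  refine Finset.sum_congr rfl fun i _ => ?_
  rw [Finset.sum_mul]
  refine Finset.sum_congr rfl fun j _ => ?_
  rw [Finset.sum_mul]
  exact Finset.sum_congr rfl fun k _ => smul_mul_assoc _ _ _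

lemma hS2 (X : CliffordAlgebra (Q n)) :
    X * SS T = ∑ i, ∑ j, ∑ k, tt n T i j k • (X * (γ n i * γ n j * γ n k)) := by
  rw [SS, Finset.mul_sum]
  refine Finset.sum_congr rfl fun i _ => ?_
  rw [Finset.mul_sum]
  refine Finset.sum_congr rfl fun j _ => ?_
  rw [Finset.mul_sum]
  exact Finset.sum_congr rfl fun k _ => mul_smul_comm _ _ _

lemma SSsq : SS T * SS T = (-3:ℝ) • E1 T + (3:ℝ) • E2 T + (-3:ℝ) • E3 T := by
  have key : SS T * SS T
      = -(SS T * SS T) - (6:ℝ) • E1 T + (6:ℝ) • E2 T - (6:ℝ) • E3 T := by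
    calc SS T * SS T
        = ∑ i, ∑ j, ∑ k, tt n T i j k • (γ n i * γ n j * γ n k * SS T) := hS1 T _
      _ = ∑ i, ∑ j, ∑ k,
            (-(tt n T i j k • (SS T * (γ n i * γ n j * γ n k)))
              - (6:ℝ) • (tt n T i j k • (DD T i * γ n j * γ n k))
              + (6:ℝ) • (tt n T i j k • (γ n i * DD T j * γ n k))
              - (6:ℝ) • (tt n T i j k • (γ n i * γ n j * DD T k))) := by
          refine Finset.sum_congr rfl fun i _ => Finset.sum_congr rfl fun j _ =>
            Finset.sum_congr rfl fun k _ => ?_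
          rw [bigpush]
          module
      _ = _ := by
          simp only [Finset.sum_sub_distrib, Finset.sum_add_distrib, Finset.sum_neg_distrib,
            ← Finset.smul_sum]
          rw [← hS2 T (SS T), E1, E2, E3]
  linear_combination (norm := module) ((2:ℝ)⁻¹ : ℝ) • key

def normSqT' : ℝ := (∑ i, ∑ j, ∑ k, tt n T i j k ^ 2) / 6

def KK (i j k l : Fin n) : ℝ := ∑ a, tt n T i j a * tt n T k l a
def MM (i j : Fin n) : ℝ := ∑ p, ∑ a, tt n T p i a * tt n T p j a
def WW : CliffordAlgebra (Q n) :=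
  ∑ i, ∑ j, ∑ k, ∑ l, KK T i l j k • (γ n i * γ n j * γ n k * γ n l)
def P1 : CliffordAlgebra (Q n) :=
  ∑ i, ∑ j, ∑ k, ∑ l, KK T i j k l • (γ n i * γ n j * γ n k * γ n l)
def P3 : CliffordAlgebra (Q n) :=
  ∑ i, ∑ j, ∑ k, ∑ l, KK T k i j l • (γ n i * γ n j * γ n k * γ n l)

lemma sum2_reindex {I M : Type*} [Fintype I] [AddCommMonoid M]
    (F : I → I → M) (σ : (I×I) ≃ (I×I)) :
    (∑ i, ∑ j, F i j) = ∑ i, ∑ j, F (σ (i,j)).1 (σ (i,j)).2 := by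
  have h := (Equiv.sum_comp σ (fun x : I×I => F x.1 x.2)).symm
  simpa only [Fintype.sum_prod_type] using h

lemma MMsym (i j : Fin n) : MM T i j = MM T j i := by
  refine Finset.sum_congr rfl fun p _ => Finset.sum_congr rfl fun a _ => mul_comm _ _

lemma trace6 : (∑ i, MM T i i) = 6 * normSqT' T := by
  rw [normSqT']
  have h0 : (∑ i, MM T i i) = ∑ i, ∑ p, ∑ a, tt n T p i a * tt n T p i a := rfl
  rw [h0, sum3_reindex (fun i p a => tt n T p i a * tt n T p i a)
    ⟨fun x => (x.2.1, x.1, x.2.2), fun x => (x.2.1, x.1, x.2.2), fun x => rfl, fun x => rfl⟩]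
  simp only [Equiv.coe_fn_mk]
  rw [show (6:ℝ) * ((∑ i, ∑ j, ∑ k, tt n T i j k ^ 2) / 6) = ∑ i, ∑ j, ∑ k, tt n T i j k ^ 2
    from by ring]
  exact Finset.sum_congr rfl fun i _ => Finset.sum_congr rfl fun p _ =>
    Finset.sum_congr rfl fun a _ => by ring

lemma ggsum (i j : Fin n) :
    γ n i * γ n j + γ n j * γ n i = (-(if i = j then (2:ℝ) else 0)) • 1 := by
  rw [gg]; module

lemma Xlemma :
    (∑ i, ∑ j, MM T i j • (γ n i * γ n j))
      = (-(6 * normSqT' T)) • (1 : CliffordAlgebra (Q n)) := by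
  have swap' : (∑ i, ∑ j, MM T i j • (γ n i * γ n j))
      = ∑ i, ∑ j, MM T i j • (γ n j * γ n i) := by
    rw [sum2_reindex (fun i j => MM T i j • (γ n i * γ n j))
      ⟨fun x => (x.2, x.1), fun x => (x.2, x.1), fun x => rfl, fun x => rfl⟩]
    simp only [Equiv.coe_fn_mk]
    exact Finset.sum_congr rfl fun i _ => Finset.sum_congr rfl fun j _ => by rw [MMsym]
  have hdouble : (∑ i, ∑ j, MM T i j • (γ n i * γ n j))
        + (∑ i, ∑ j, MM T i j • (γ n i * γ n j))
      = (-(2 * (6 * normSqT' T))) • (1 : CliffordAlgebra (Q n)) := by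
    nth_rewrite 2 [swap']
    calc (∑ i, ∑ j, MM T i j • (γ n i * γ n j)) + (∑ i, ∑ j, MM T i j • (γ n j * γ n i))
        = ∑ i, ∑ j, (MM T i j • (γ n i * γ n j) + MM T i j • (γ n j * γ n i)) := by
          rw [← Finset.sum_add_distrib]
          exact Finset.sum_congr rfl fun i _ => by rw [← Finset.sum_add_distrib]
      _ = ∑ i, ∑ j, (MM T i j * (-(if i = j then (2:ℝ) else 0))) • (1:CliffordAlgebra (Q n)) := by
          refine Finset.sum_congr rfl fun i _ => Finset.sum_congr rfl fun j _ => ?_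
          rw [← smul_add, ggsum, smul_smul]
      _ = ∑ i, (MM T i i * (-2:ℝ)) • (1:CliffordAlgebra (Q n)) := by
          refine Finset.sum_congr rfl fun i _ => ?_
          simp [mul_ite, ite_smul, Finset.sum_ite_eq, Finset.mem_univ]
      _ = ((∑ i, MM T i i) * (-2:ℝ)) • (1:CliffordAlgebra (Q n)) := by
          rw [← Finset.sum_smul, Finset.sum_mul]
      _ = _ := by rw [trace6]; match_scalars; ring
  linear_combination (norm := module) ((2:ℝ)⁻¹ : ℝ) • hdouble

lemma E1P1 : E1 T = P1 T := by
  have h1 : E1 T = ∑ i, ∑ j, ∑ k, ∑ l, ∑ m,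
      (tt n T i j k * tt n T l m i) • (γ n l * γ n m * γ n j * γ n k) := by
    simp only [E1, DD, Finset.sum_mul, smul_mul_assoc, Finset.smul_sum, smul_smul]
  have h2 : P1 T = ∑ i, ∑ j, ∑ k, ∑ l, ∑ m,
      (tt n T i j m * tt n T k l m) • (γ n i * γ n j * γ n k * γ n l) := by
    simp only [P1, KK, Finset.sum_smul]
  rw [h1, h2, sum5_reindex
    (fun i j k l m => (tt n T i j k * tt n T l m i) • (γ n l * γ n m * γ n j * γ n k))
    ⟨fun x => (x.2.2.2.2, x.2.2.1, x.2.2.2.1, x.1, x.2.1),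
      fun y => (y.2.2.2.1, y.2.2.2.2, y.2.1, y.2.2.1, y.1), fun x => rfl, fun x => rfl⟩]
  simp only [Equiv.coe_fn_mk]
  refine Finset.sum_congr rfl fun i _ => Finset.sum_congr rfl fun j _ =>
    Finset.sum_congr rfl fun k _ => Finset.sum_congr rfl fun l _ =>
    Finset.sum_congr rfl fun m _ => ?_
  rw [show tt n T m k l = tt n T k l m from tt_rot T m k l, mul_comm]

lemma E3P1 : E3 T = P1 T := by
  have h1 : E3 T = ∑ i, ∑ j, ∑ k, ∑ l, ∑ m,
      (tt n T i j k * tt n T l m k) • (γ n i * γ n j * γ n l * γ n m) := by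
    simp only [E3, DD, Finset.mul_sum, mul_smul_comm, Finset.smul_sum, smul_smul, ← mul_assoc]
  have h2 : P1 T = ∑ i, ∑ j, ∑ k, ∑ l, ∑ m,
      (tt n T i j m * tt n T k l m) • (γ n i * γ n j * γ n k * γ n l) := by
    simp only [P1, KK, Finset.sum_smul]
  rw [h1, h2, sum5_reindex
    (fun i j k l m => (tt n T i j k * tt n T l m k) • (γ n i * γ n j * γ n l * γ n m))
    ⟨fun x => (x.1, x.2.1, x.2.2.2.2, x.2.2.1, x.2.2.2.1),
      fun y => (y.1, y.2.1, y.2.2.2.1, y.2.2.2.2, y.2.2.1), fun x => rfl, fun x => rfl⟩]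
  rfl

lemma E2W : E2 T = -WW T := by
  have h1 : E2 T = ∑ i, ∑ j, ∑ k, ∑ l, ∑ m,
      (tt n T i j k * tt n T l m j) • (γ n i * γ n l * γ n m * γ n k) := by
    simp only [E2, DD, Finset.mul_sum, mul_smul_comm, Finset.sum_mul, smul_mul_assoc,
      Finset.smul_sum, smul_smul, ← mul_assoc]
  have h2 : -WW T = ∑ i, ∑ j, ∑ k, ∑ l, ∑ m,
      (-(tt n T i l m * tt n T j k m)) • (γ n i * γ n j * γ n k * γ n l) := by
    simp only [WW, KK, Finset.sum_smul, ← Finset.sum_neg_distrib, ← neg_smul]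
  rw [h1, h2, sum5_reindex
    (fun i j k l m => (tt n T i j k * tt n T l m j) • (γ n i * γ n l * γ n m * γ n k))
    ⟨fun x => (x.1, x.2.2.2.2, x.2.2.2.1, x.2.1, x.2.2.1),
      fun y => (y.1, y.2.2.2.1, y.2.2.2.2, y.2.2.1, y.2.1), fun x => rfl, fun x => rfl⟩]
  simp only [Equiv.coe_fn_mk]
  refine Finset.sum_congr rfl fun i _ => Finset.sum_congr rfl fun j _ =>
    Finset.sum_congr rfl fun k _ => Finset.sum_congr rfl fun l _ =>
    Finset.sum_congr rfl fun m _ => ?_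
  rw [show tt n T i m l = -tt n T i l m from tt_swap23 T i l m]
  ring_nf

lemma KKsum1 (i j : Fin n) : (∑ k, KK T i k k j) = -MM T i j := by
  rw [MM, ← Finset.sum_neg_distrib]
  refine Finset.sum_congr rfl fun k _ => ?_
  rw [KK, ← Finset.sum_neg_distrib]
  refine Finset.sum_congr rfl fun a _ => ?_
  rw [show tt n T i k a = -tt n T k i a from (tt_swap12 T k i a)]
  ring

lemma KKsum2 (i j : Fin n) : (∑ k, KK T i k j k) = MM T i j := by
  rw [MM]
  refine Finset.sum_congr rfl fun k _ => ?_
  rw [KK]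
  refine Finset.sum_congr rfl fun a _ => ?_
  rw [show tt n T i k a = -tt n T k i a from (tt_swap12 T k i a),
    show tt n T j k a = -tt n T k j a from (tt_swap12 T k j a)]
  ring

lemma pieceA :
    (∑ i, ∑ j, ∑ k, ∑ l, (KK T i j k l * (if k = j then (2:ℝ) else 0)) • (γ n i * γ n l))
      = (12 * normSqT' T) • (1 : CliffordAlgebra (Q n)) := by
  rw [sum4_reindex
    (fun i j k l => (KK T i j k l * (if k = j then (2:ℝ) else 0)) • (γ n i * γ n l))
    ⟨fun x => (x.1, x.2.2.1, x.2.2.2, x.2.1), fun y => (y.1, y.2.2.2, y.2.1, y.2.2.1),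
      fun x => rfl, fun x => rfl⟩]
  simp only [Equiv.coe_fn_mk]
  -- summand : (KK i k l j * ite (l = k) 2 0) • (γ i * γ j), collapse l
  have hcol : ∀ i j, (∑ k, ∑ l, (KK T i k l j * (if l = k then (2:ℝ) else 0)) • (γ n i * γ n j))
      = ((-2:ℝ) * MM T i j) • (γ n i * γ n j) := by
    intro i j
    have : ∀ k, (∑ l, (KK T i k l j * (if l = k then (2:ℝ) else 0)) • (γ n i * γ n j))
        = (KK T i k k j * 2) • (γ n i * γ n j) := by
      intro k
      simp [mul_ite, mul_zero, ite_smul, zero_smul, Finset.sum_ite_eq', Finset.mem_univ]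
    simp only [this]
    rw [← Finset.sum_smul, ← Finset.sum_mul, KKsum1]
    match_scalars; ring
  simp only [hcol]
  have : ∀ i j, ((-2:ℝ) * MM T i j) • (γ n i * γ n j)
      = (-2:ℝ) • (MM T i j • (γ n i * γ n j)) := by intros; rw [smul_smul]
  simp only [this, ← Finset.smul_sum]
  rw [Xlemma]
  match_scalars; ring

lemma pieceB :
    (∑ i, ∑ j, ∑ k, ∑ l, (KK T i j k l * (if l = j then (2:ℝ) else 0)) • (γ n i * γ n k))
      = (-(12 * normSqT' T)) • (1 : CliffordAlgebra (Q n)) := by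
  rw [sum4_reindex
    (fun i j k l => (KK T i j k l * (if l = j then (2:ℝ) else 0)) • (γ n i * γ n k))
    ⟨fun x => (x.1, x.2.2.1, x.2.1, x.2.2.2), fun y => (y.1, y.2.2.1, y.2.1, y.2.2.2),
      fun x => rfl, fun x => rfl⟩]
  simp only [Equiv.coe_fn_mk]
  -- summand : (KK i k j l * ite (l = k) 2 0) • (γ i * γ j), collapse l
  have hcol : ∀ i j, (∑ k, ∑ l, (KK T i k j l * (if l = k then (2:ℝ) else 0)) • (γ n i * γ n j))
      = ((2:ℝ) * MM T i j) • (γ n i * γ n j) := by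
    intro i j
    have : ∀ k, (∑ l, (KK T i k j l * (if l = k then (2:ℝ) else 0)) • (γ n i * γ n j))
        = (KK T i k j k * 2) • (γ n i * γ n j) := by
      intro k
      simp [mul_ite, mul_zero, ite_smul, zero_smul, Finset.sum_ite_eq', Finset.mem_univ]
    simp only [this]
    rw [← Finset.sum_smul, ← Finset.sum_mul, KKsum2]
    match_scalars; ring
  simp only [hcol]
  have : ∀ i j, ((2:ℝ) * MM T i j) • (γ n i * γ n j)
      = (2:ℝ) • (MM T i j • (γ n i * γ n j)) := by intros; rw [smul_smul]
  simp only [this, ← Finset.smul_sum]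
  rw [Xlemma]
  match_scalars; ring

lemma WP1 : WW T = P1 T + (24 * normSqT' T) • (1 : CliffordAlgebra (Q n)) := by
  have step1 : WW T = ∑ i, ∑ j, ∑ k, ∑ l,
      KK T i j k l • (γ n i * γ n k * γ n l * γ n j) := by
    rw [WW, sum4_reindex (fun i j k l => KK T i l j k • (γ n i * γ n j * γ n k * γ n l))
      ⟨fun x => (x.1, x.2.2.1, x.2.2.2, x.2.1), fun y => (y.1, y.2.2.2, y.2.1, y.2.2.1),
        fun x => rfl, fun x => rfl⟩]
    rfl
  have step2 : WW T = ∑ i, ∑ j, ∑ k, ∑ l,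
      (KK T i j k l • (γ n i * γ n j * γ n k * γ n l)
        + (KK T i j k l * (if k = j then (2:ℝ) else 0)) • (γ n i * γ n l)
        - (KK T i j k l * (if l = j then (2:ℝ) else 0)) • (γ n i * γ n k)) := by
    rw [step1]
    refine Finset.sum_congr rfl fun i _ => Finset.sum_congr rfl fun j _ =>
      Finset.sum_congr rfl fun k _ => Finset.sum_congr rfl fun l _ => ?_
    rw [pushR4]
    module
  rw [step2]
  simp only [Finset.sum_add_distrib, Finset.sum_sub_distrib]
  rw [pieceA, pieceB, ← P1]
  match_scalars <;> ring

lemma WP3 : P3 T = WW T - (12 * normSqT' T) • (1 : CliffordAlgebra (Q n)) := by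
  have step1 : WW T = ∑ i, ∑ j, ∑ k, ∑ l,
      KK T i k j l • (γ n i * γ n j * γ n l * γ n k) := by
    rw [WW, sum4_reindex (fun i j k l => KK T i l j k • (γ n i * γ n j * γ n k * γ n l))
      ⟨fun x => (x.1, x.2.1, x.2.2.2, x.2.2.1), fun y => (y.1, y.2.1, y.2.2.2, y.2.2.1),
        fun x => rfl, fun x => rfl⟩]
    rfl
  have step2 : WW T = ∑ i, ∑ j, ∑ k, ∑ l,
      ((-(KK T i k j l)) • (γ n i * γ n j * γ n k * γ n l)
        - (KK T i k j l * (if l = k then (2:ℝ) else 0)) • (γ n i * γ n j)) := by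
    rw [step1]
    refine Finset.sum_congr rfl fun i _ => Finset.sum_congr rfl fun j _ =>
      Finset.sum_congr rfl fun k _ => Finset.sum_congr rfl fun l _ => ?_
    rw [pushR2]
    module
  have hP3' : (∑ i, ∑ j, ∑ k, ∑ l, (-(KK T i k j l)) • (γ n i * γ n j * γ n k * γ n l))
      = P3 T := by
    rw [P3]
    refine Finset.sum_congr rfl fun i _ => Finset.sum_congr rfl fun j _ =>
      Finset.sum_congr rfl fun k _ => Finset.sum_congr rfl fun l _ => ?_
    congr 1
    rw [KK, KK, ← Finset.sum_neg_distrib]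
    refine Finset.sum_congr rfl fun a _ => ?_
    rw [show tt n T i k a = -tt n T k i a from (tt_swap12 T k i a)]
    ring
  have hpiece : (∑ i, ∑ j, ∑ k, ∑ l,
      (KK T i k j l * (if l = k then (2:ℝ) else 0)) • (γ n i * γ n j))
      = (-(12 * normSqT' T)) • (1 : CliffordAlgebra (Q n)) := by
    have hcol : ∀ i j, (∑ k, ∑ l, (KK T i k j l * (if l = k then (2:ℝ) else 0)) • (γ n i * γ n j))
        = ((2:ℝ) * MM T i j) • (γ n i * γ n j) := by
      intro i j
      have : ∀ k, (∑ l, (KK T i k j l * (if l = k then (2:ℝ) else 0)) • (γ n i * γ n j))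
          = (KK T i k j k * 2) • (γ n i * γ n j) := by
        intro k
        simp [mul_ite, mul_zero, ite_smul, zero_smul, Finset.sum_ite_eq', Finset.mem_univ]
      simp only [this]
      rw [← Finset.sum_smul, ← Finset.sum_mul, KKsum2]
      match_scalars; ring
    simp only [hcol]
    have : ∀ i j, ((2:ℝ) * MM T i j) • (γ n i * γ n j)
        = (2:ℝ) • (MM T i j • (γ n i * γ n j)) := by intros; rw [smul_smul]
    simp only [this, ← Finset.smul_sum]
    rw [Xlemma]
    match_scalars; ring
  have hsplit := step2
  simp only [Finset.sum_sub_distrib] at hsplit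
  rw [hP3', hpiece] at hsplit
  linear_combination (norm := module) hsplit.symm

lemma normSq_eq : normSqT n T = normSqT' T := rfl

lemma hcl3 : cl3 n T = (6:ℝ)⁻¹ • SS T := by
  rw [cl3, SS, Finset.smul_sum]
  refine Finset.sum_congr rfl fun i _ => ?_
  rw [Finset.smul_sum]
  refine Finset.sum_congr rfl fun j _ => ?_
  rw [Finset.smul_sum]
  refine Finset.sum_congr rfl fun k _ => ?_
  rw [smul_smul]
  congr 1
  show T ![e n i, e n j, e n k] / 6 = 6⁻¹ * T ![e n i, e n j, e n k]
  ring

lemma hsig (i j k l : Fin n) :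
    sigmaT n T (e n i) (e n j) (e n k) (e n l)
      = KK T i j k l + KK T j k i l + KK T k i j l := by
  rw [sigmaT, KK, KK, KK, ← Finset.sum_add_distrib, ← Finset.sum_add_distrib]
  rfl

lemma P2W : (∑ i, ∑ j, ∑ k, ∑ l, KK T j k i l • (γ n i * γ n j * γ n k * γ n l)) = WW T := by
  rw [WW]
  refine Finset.sum_congr rfl fun i _ => Finset.sum_congr rfl fun j _ =>
    Finset.sum_congr rfl fun k _ => Finset.sum_congr rfl fun l _ => ?_
  congr 1
  exact Finset.sum_congr rfl fun a _ => mul_comm _ _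

lemma hcl4 : cl4sigma n T = (24:ℝ)⁻¹ • (P1 T + WW T + P3 T) := by
  have step1 : cl4sigma n T = ∑ i, ∑ j, ∑ k, ∑ l,
      ((24:ℝ)⁻¹ • (KK T i j k l • (γ n i * γ n j * γ n k * γ n l))
        + (24:ℝ)⁻¹ • (KK T j k i l • (γ n i * γ n j * γ n k * γ n l))
        + (24:ℝ)⁻¹ • (KK T k i j l • (γ n i * γ n j * γ n k * γ n l))) := by
    rw [cl4sigma]
    refine Finset.sum_congr rfl fun i _ => Finset.sum_congr rfl fun j _ =>
      Finset.sum_congr rfl fun k _ => Finset.sum_congr rfl fun l _ => ?_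
    rw [hsig]
    module
  rw [step1]
  simp only [Finset.sum_add_distrib, ← Finset.smul_sum]
  rw [← P1, ← P3, P2W]
  module


variable (n : ℕ)

theorem torsion_sq_in_clifford (T : AlternatingMap ℝ (Fin n → ℝ) ℝ (Fin 3)) :
    cl3 n T * cl3 n T
      = (-2 : ℝ) • cl4sigma n T + algebraMap ℝ (CliffordAlgebra (Q n)) (normSqT n T) := by
  have hP1 : P1 T = WW T - (24 * normSqT' T) • (1 : CliffordAlgebra (Q n)) := by
    linear_combination (norm := module) (WP1 T).symm
  rw [hcl3, hcl4, smul_mul_assoc, mul_smul_comm, SSsq, E1P1, E2W, E3P1, hP1, WP3,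
    Algebra.algebraMap_eq_smul_one, normSq_eq]
  match_scalars <;> ring

end
end

section
/- Let T = α e₁∧e₃∧e₅ + α' e₂∧e₄∧e₆ + β(e₂∧e₄∧e₅ + e₂∧e₃∧e₆ + e₁∧e₄∧e₆) be a 3-form on ℝ⁶. Then σ_T = β(β - α)(e₁∧e₂∧e₅∧e₆ + e₁∧e₂∧e₃∧e₄ + e₃∧e₄∧e₅∧e₆). In particular, the 2-form *σ_T has rank 6 if and only if β ≠ 0 and α ≠ β. -/
/- STATEMENT 15: For T = α e₁∧e₃∧e₅ + α' e₂∧e₄∧e₆ + β(e₂∧e₄∧e₅ + e₂∧e₃∧e₆ + e₁∧e₄∧e₆)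
on ℝ⁶ one has σ_T = β(β-α)(e₁∧e₂∧e₅∧e₆ + e₁∧e₂∧e₃∧e₄ + e₃∧e₄∧e₅∧e₆); in particular the
2-form *σ_T (identified with a skew-symmetric matrix via its values on the basis) has
rank 6 if and only if β ≠ 0 and α ≠ β.

ℝ⁶ = Fin 6 → ℝ with standard basis (0-based indices); wedge products of dual basis 1-forms
are written as determinants of coordinates; σ_T(X,Y,Z,W) = Σ_cyclic{X,Y,Z} ⟨T(X,Y),T(Z,W)⟩.
Since *(e₁∧e₂∧e₅∧e₆) = e₃∧e₄, *(e₁∧e₂∧e₃∧e₄) = e₅∧e₆ and *(e₃∧e₄∧e₅∧e₆) = e₁∧e₂, the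
2-form *σ_T is β(β-α)(e₃∧e₄ + e₅∧e₆ + e₁∧e₂), whose matrix of values on the basis is
`starSigmaMatrix` below. -/

noncomputable section

def d3 (i j k : Fin 6) (X Y Z : Fin 6 → ℝ) : ℝ :=
  Matrix.det (Matrix.of fun p q => ![X, Y, Z] p (![i, j, k] q))

def d4 (i j k l : Fin 6) (X Y Z W : Fin 6 → ℝ) : ℝ :=
  Matrix.det (Matrix.of fun p q => ![X, Y, Z, W] p (![i, j, k, l] q))

/-- T = α e₁∧e₃∧e₅ + α' e₂∧e₄∧e₆ + β(e₂∧e₄∧e₅ + e₂∧e₃∧e₆ + e₁∧e₄∧e₆) -/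
def Tq (a a' b : ℝ) (X Y Z : Fin 6 → ℝ) : ℝ :=
  a * d3 0 2 4 X Y Z + a' * d3 1 3 5 X Y Z
    + b * (d3 1 3 4 X Y Z + d3 1 2 5 X Y Z + d3 0 3 5 X Y Z)

/-- σ_T(X,Y,Z,W) = Σ_cyclic{X,Y,Z} ⟨T(X,Y), T(Z,W)⟩ -/
def sigmaq (a a' b : ℝ) (X Y Z W : Fin 6 → ℝ) : ℝ :=
  ∑ m : Fin 6,
    (Tq a a' b X Y (Pi.single m 1) * Tq a a' b Z W (Pi.single m 1)
      + Tq a a' b Y Z (Pi.single m 1) * Tq a a' b X W (Pi.single m 1)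
      + Tq a a' b Z X (Pi.single m 1) * Tq a a' b Y W (Pi.single m 1))

/-- the matrix ((*σ_T)(e_i, e_j))_{ij} of the 2-form *σ_T = β(β-α)(e₁∧e₂ + e₃∧e₄ + e₅∧e₆) -/
def starSigmaMatrix (a b : ℝ) : Matrix (Fin 6) (Fin 6) ℝ :=
  (b * (b - a)) • !![0, 1, 0, 0, 0, 0; -1, 0, 0, 0, 0, 0;
                    0, 0, 0, 1, 0, 0; 0, 0, -1, 0, 0, 0;
                    0, 0, 0, 0, 0, 1; 0, 0, 0, 0, -1, 0]

/- Contracting `T` with a basis vector leaves a 2-form whose coefficients are the 2×2 minors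
`X i * Y j - X j * Y i`; the 4×4 minors are sums of products of such minors (Laplace expansion
along the first two rows), so both sides of the formula for `σ_T` are explicit quartic polynomials
in the coordinates of `X, Y, Z, W`, and they agree identically. The matrix of `*σ_T` is
`β(β - α)` times the standard symplectic matrix, which is invertible; hence it has rank 6 exactly
when `β(β - α) ≠ 0`. -/

lemma Matrix.rank_smul_eq_card_iff {K n : Type*} [Field K] [Fintype n] [DecidableEq n]
    [Nonempty n] {A : Matrix n n K} (hA : IsUnit A) {c : K} :
    (c • A).rank = Fintype.card n ↔ c ≠ 0 := by
  refine ⟨fun h hc => ?_, fun hc => ?_⟩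
  · simp [hc, Matrix.rank_zero, Fintype.card_ne_zero.symm] at h
  · rw [Matrix.rank_smul_of_mem_nonZeroDivisors A (mem_nonZeroDivisors_of_ne_zero hc),
      Matrix.rank_of_isUnit A hA]

def d2 (i j : Fin 6) (X Y : Fin 6 → ℝ) : ℝ := X i * Y j - X j * Y i

lemma d3_eq_d2 (i j k : Fin 6) (X Y Z : Fin 6 → ℝ) :
    d3 i j k X Y Z = d2 j k X Y * Z i - d2 i k X Y * Z j + d2 i j X Y * Z k := by
  simp only [d3, d2, Matrix.det_fin_three, Matrix.of_apply, Matrix.cons_val]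
  ring

lemma d4_eq_d2 (i j k l : Fin 6) (X Y Z W : Fin 6 → ℝ) :
    d4 i j k l X Y Z W
      = d2 i j X Y * d2 k l Z W - d2 i k X Y * d2 j l Z W + d2 i l X Y * d2 j k Z W
        + d2 j k X Y * d2 i l Z W - d2 j l X Y * d2 i k Z W + d2 k l X Y * d2 i j Z W := by
  rw [d4, Matrix.det_succ_row_zero, Fin.sum_univ_four]
  simp [Matrix.det_fin_three, Fin.succAbove, Fin.lt_def, d2]
  ring

lemma Tq_apply_single (a a' b : ℝ) (X Y : Fin 6 → ℝ) (m : Fin 6) :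
    Tq a a' b X Y (Pi.single m 1)
      = ![a * d2 2 4 X Y + b * d2 3 5 X Y,
          a' * d2 3 5 X Y + b * (d2 3 4 X Y + d2 2 5 X Y),
          -(a * d2 0 4 X Y + b * d2 1 5 X Y),
          -(a' * d2 1 5 X Y + b * (d2 1 4 X Y + d2 0 5 X Y)),
          a * d2 0 2 X Y + b * d2 1 3 X Y,
          a' * d2 1 3 X Y + b * (d2 1 2 X Y + d2 0 3 X Y)] m := by
  fin_cases m <;> simp [Tq, d3_eq_d2] <;> ring

lemma sigmaq_eq_d4 (a a' b : ℝ) (X Y Z W : Fin 6 → ℝ) :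
    sigmaq a a' b X Y Z W
      = b * (b - a) * (d4 0 1 4 5 X Y Z W + d4 0 1 2 3 X Y Z W + d4 2 3 4 5 X Y Z W) := by
  simp only [sigmaq, Fin.sum_univ_six, Tq_apply_single, d4_eq_d2]
  simp only [Matrix.cons_val, d2]
  ring

-- `starSigmaMatrix 0 1` is the standard symplectic matrix itself.
set_option maxRecDepth 4000 in
lemma isUnit_starSigmaMatrix_zero_one : IsUnit (starSigmaMatrix 0 1) := by
  have hdet : (starSigmaMatrix 0 1).det = 1 := by
    simp [starSigmaMatrix, Matrix.det_succ_row_zero, Fin.sum_univ_succ]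
    simp [Fin.succAbove, Fin.lt_def]
  rw [Matrix.isUnit_iff_isUnit_det, hdet]
  exact isUnit_one

lemma rank_starSigmaMatrix_eq_six_iff (a b : ℝ) :
    (starSigmaMatrix a b).rank = 6 ↔ (b ≠ 0 ∧ a ≠ b) := by
  have hsmul : starSigmaMatrix a b = (b * (b - a)) • starSigmaMatrix 0 1 := by
    simp [starSigmaMatrix]
  rw [hsmul]
  refine (Matrix.rank_smul_eq_card_iff isUnit_starSigmaMatrix_zero_one).trans ?_
  simp [sub_eq_zero, eq_comm]

theorem sigmaT_generic_form (a a' b : ℝ) :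
    (∀ X Y Z W : Fin 6 → ℝ,
        sigmaq a a' b X Y Z W
          = b * (b - a) * (d4 0 1 4 5 X Y Z W + d4 0 1 2 3 X Y Z W + d4 2 3 4 5 X Y Z W))
      ∧ ((starSigmaMatrix a b).rank = 6 ↔ (b ≠ 0 ∧ a ≠ b)) :=
  ⟨sigmaq_eq_d4 a a' b, rank_starSigmaMatrix_eq_six_iff a b⟩

end
end
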